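/- Let K be a CW-complex and P a Polish ANR that is homotopy equivalent to K. If Z is a normal space with Z ∈ α(K), then Z ∈ α(P); moreover, in this situation P is an absolute extensor for Z (i.e., every continuous map from a closed subset of Z to P extends continuously over Z). -/

import Mathlib

open Topology Set TopologicalSpace

universe u v

/-- `K` is an absolute extensor of `X`: every continuous map from a closed subset of `X`
into `K` extends continuously over `X`.  `eDimLe X K` means e-dim X ≤ K. -/
def eDimLe (X : Type u) [TopologicalSpace X] (K : Type v) [TopologicalSpace K] : Prop :=
  ∀ A : Set X, IsClosed A → ∀ f : C(A, K), ∃ F : C(X, K), ∀ a : A, F a = f a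

/-- `X` is an absolute extensor for `Z`. -/
def IsAbsExtensorOf (K : Type v) [TopologicalSpace K] (Z : Type u) [TopologicalSpace Z] : Prop :=
  ∀ A : Set Z, IsClosed A → ∀ f : C(A, K), ∃ F : C(Z, K), ∀ a : A, F a = f a

/-- The class α(K): every continuous map from a closed subset `A` of `Z` to `K` which extends
to a neighborhood of `A` extends over all of `Z`. -/
def InAlpha (K : Type v) [TopologicalSpace K] (Z : Type u) [TopologicalSpace Z] : Prop :=
  ∀ A : Set Z, IsClosed A → ∀ f : C(A, K),
    (∃ U : Set Z, IsOpen U ∧ A ⊆ U ∧ ∃ g : C(U, K),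
      ∀ a : A, ∀ hU : (a : Z) ∈ U, g ⟨a, hU⟩ = f a) →
    ∃ F : C(Z, K), ∀ a : A, F a = f a

/-- A continuous map `f : X → Y` is `K`-soft. -/
def IsKSoft {X : Type u} {Y : Type v} [TopologicalSpace X] [TopologicalSpace Y]
    (K : Type*) [TopologicalSpace K] (f : C(X, Y)) : Prop :=
  ∀ (Z : Type u) (_ : TopologicalSpace Z), NormalSpace Z → InAlpha K Z →
    ∀ Z₀ : Set Z, IsClosed Z₀ → ∀ (g : C(Z₀, X)) (h : C(Z, Y)),
      (∀ z : Z₀, f (g z) = h z) →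
      ∃ k : C(Z, X), (∀ z : Z₀, k z = g z) ∧ ∀ z : Z, f (k z) = h z

/-- The topology of `X` is induced by a complete metric. -/
def CompletelyMetrizable (X : Type u) [t : TopologicalSpace X] : Prop :=
  ∃ m : MetricSpace X, m.toUniformSpace.toTopologicalSpace = t ∧
    @CompleteSpace X m.toUniformSpace

/-- The weight of a topological space: the least cardinality of a base of its topology. -/
noncomputable def topWeight (X : Type u) [TopologicalSpace X] : Cardinal.{u} :=
  sInf { c | ∃ B : Set (Set X), IsTopologicalBasis B ∧ Cardinal.mk B = c }

/-- The Hilbert space `l₂(τ)` of weight `τ`. -/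
abbrev Hilbert (τ : Cardinal.{u}) : Type u := lp (fun _ : τ.out => ℝ) 2

/-- `K` is (homeomorphic to) a CW-complex. -/
def IsCWComplex (K : Type u) [TopologicalSpace K] : Prop :=
  ∃ (X : TopCat.{u}) (_ : TopCat.CWComplex X), Nonempty (X ≃ₜ K)

/-- `K` is (homeomorphic to) a countable CW-complex. -/
def IsCountableCWComplex (K : Type u) [TopologicalSpace K] : Prop :=
  ∃ (X : TopCat.{u}) (C : TopCat.CWComplex X), (∀ n : ℕ, Countable (C.attachCells n (not_isMax n)).ι) ∧
    Nonempty (X ≃ₜ K)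

/-- Two maps into `X` are `𝒰`-close for a family `𝒰` of subsets of `X`. -/
def UClose {X : Type u} {Z : Type v} (𝒰 : Set (Set X)) (g h : Z → X) : Prop :=
  ∀ z : Z, ∃ U ∈ 𝒰, g z ∈ U ∧ h z ∈ U

/-- `f : X → Y` is strongly `(K,τ)`-universal. -/
def StronglyUniversal {X : Type u} {Y : Type v} [TopologicalSpace X] [TopologicalSpace Y]
    (K : Type*) [TopologicalSpace K] (τ : Cardinal.{u}) (f : C(X, Y)) : Prop :=
  ∀ 𝒰 : Set (Set X), (∀ U ∈ 𝒰, IsOpen U) → ⋃₀ 𝒰 = univ →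
    ∀ (Z : Type u) (_ : TopologicalSpace Z), MetrizableSpace Z → topWeight Z ≤ τ →
      eDimLe Z K → ∀ g : C(Z, X),
        (∃ h : C(Z, X), IsEmbedding h ∧ UClose 𝒰 g h ∧ ∀ z : Z, f (h z) = f (g z)) ∧
        (CompletelyMetrizable Z →
          ∃ h : C(Z, X), IsClosedEmbedding h ∧ UClose 𝒰 g h ∧ ∀ z : Z, f (h z) = f (g z))

/-- A map between metrizable spaces is uniformly 0-dimensional. -/
def UniformlyZeroDimensional {X : Type u} {Y : Type v} [tX : TopologicalSpace X]
    [TopologicalSpace Y] (f : X → Y) : Prop :=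
  ∃ m : MetricSpace X, m.toUniformSpace.toTopologicalSpace = tX ∧
    ∀ ε : ℝ, 0 < ε → ∀ y ∈ Set.range f, ∃ U : Set Y, IsOpen U ∧ y ∈ U ∧
      ∃ 𝒱 : Set (Set X), (∀ V ∈ 𝒱, IsOpen V ∧ ∀ x ∈ V, ∀ x' ∈ V, m.dist x x' < ε) ∧
        𝒱.PairwiseDisjoint id ∧ f ⁻¹' U = ⋃₀ 𝒱


/-- `P` is an absolute neighborhood retract (equivalently, an absolute neighborhood
extensor for metrizable spaces). -/
def IsANR (P : Type u) [TopologicalSpace P] : Prop :=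
  ∀ (X : Type u) (_ : TopologicalSpace X), MetrizableSpace X → ∀ A : Set X, IsClosed A →
    ∀ f : C(A, P), ∃ U : Set X, IsOpen U ∧ A ⊆ U ∧ ∃ g : C(U, P),
      ∀ a : A, ∀ hU : (a : X) ∈ U, g ⟨a, hU⟩ = f a

/-!
Since `φ ∘ ψ ≃ id` for a homotopy equivalence `φ : K → P`, a map `g` into `P` defined near `A`
is homotopic there to `φ ∘ ψ ∘ g`, and `ψ ∘ g` extends over `Z` because `Z ∈ α(K)`; the
homotopy is then absorbed in a collar of `A`, so `Z ∈ α(P)`. For the absolute extensor property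
it remains to extend maps `A → P` to a neighbourhood of `A`: a Polish space is a closed subset of
`ℝ^ℕ × ℝ^ℕ`, where Tietze's theorem applies, and an ANR is a neighbourhood retract there.
-/

open Filter Metric

section GluingHomotopy

variable {Z P : Type*} [TopologicalSpace Z] [NormalSpace Z] [TopologicalSpace P]

/-- The homotopy is run on `U` at a speed given by an Urysohn function that is `1` on `A` and
vanishes outside a smaller neighbourhood, and the result is glued with `F₀` off that
neighbourhood. -/
theorem exists_extension_of_homotopy_restrict {A U : Set Z} (hA : IsClosed A) (hU : IsOpen U)
    (hAU : A ⊆ U) {F₀ : C(Z, P)} {g : C(U, P)} (H : (F₀.restrict U).Homotopy g) :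
    ∃ F : C(Z, P), ∀ (a : Z) (ha : a ∈ A), F a = g ⟨a, hAU ha⟩ := by
  classical
  obtain ⟨V, hV, hAV, hVU⟩ := normal_exists_closure_subset hA hU hAU
  obtain ⟨t, ht0, ht1, htI⟩ := exists_continuous_zero_one_of_isClosed hV.isClosed_compl hA
    (disjoint_compl_left_iff_subset.2 hAV)
  let s : C(Z, unitInterval) := ⟨fun z => ⟨t z, htI z⟩, by fun_prop⟩
  let F : Z → P := fun z => if hz : z ∈ U then H (s z, ⟨z, hz⟩) else F₀ z
  have hF_U : ContinuousOn F U := by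
    rw [continuousOn_iff_continuous_domRestrict]
    have : U.domRestrict F = fun u : U => H (s u, u) := by
      funext u
      simp only [Set.domRestrict_apply, F, dif_pos u.2]
    rw [this]
    fun_prop
  have hF_out : EqOn F F₀ (closure V)ᶜ := by
    intro z hz
    by_cases hzU : z ∈ U
    · have hs : s z = 0 := Subtype.ext (ht0 fun hzV => hz (subset_closure hzV))
      simp only [F, dif_pos hzU, hs, H.apply_zero, ContinuousMap.restrict_apply]
    · simp only [F, dif_neg hzU]
  refine ⟨⟨F, continuous_iff_continuousAt.2 fun z => ?_⟩, fun a ha => ?_⟩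
  · by_cases hzU : z ∈ U
    · exact hF_U.continuousAt (hU.mem_nhds hzU)
    · have hz : z ∈ (closure V)ᶜ := fun hzV => hzU (hVU hzV)
      exact F₀.continuous.continuousAt.congr
        (eventuallyEq_of_mem (isClosed_closure.isOpen_compl.mem_nhds hz) hF_out).symm
  · have hs : s a = 1 := Subtype.ext (ht1 ha)
    simp only [ContinuousMap.coe_mk, F, dif_pos (hAU ha), hs, H.apply_one]

end GluingHomotopy

theorem InAlpha.of_homotopic_comp {K P Z : Type*} [TopologicalSpace K] [TopologicalSpace P]
    [TopologicalSpace Z] [NormalSpace Z] {φ : C(K, P)} {ψ : C(P, K)}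
    (hφψ : (φ.comp ψ).Homotopic (ContinuousMap.id P)) (hZ : InAlpha K Z) : InAlpha P Z := by
  rintro A hA f ⟨U, hU, hAU, g, hg⟩
  obtain ⟨V, hV, hAV, hVU⟩ := normal_exists_closure_subset hA hU hAU
  obtain ⟨G, hG⟩ := hZ (closure V) isClosed_closure
    (ψ.comp (g.comp ⟨inclusion hVU, continuous_inclusion hVU⟩))
    ⟨U, hU, hVU, ψ.comp g, fun _ _ => rfl⟩
  let gV : C(V, P) := g.comp ⟨inclusion (subset_closure.trans hVU), continuous_inclusion _⟩
  have hGV : (φ.comp ψ).comp gV = (φ.comp G).restrict V := by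
    ext v
    exact congrArg φ (hG ⟨v, subset_closure v.2⟩).symm
  obtain ⟨F, hF⟩ := exists_extension_of_homotopy_restrict hA hV hAV
    ((hφψ.some.compContinuousMap gV).cast hGV (ContinuousMap.id_comp gV))
  exact ⟨F, fun a => (hF a a.2).trans (hg a _)⟩

def distToSeq {P : Type*} [MetricSpace P] (x : ℕ → P) (p : P) : ℕ → ℝ := fun n => dist p (x n)

namespace distToSeq

variable {P : Type*} [MetricSpace P] (x : ℕ → P)

theorem continuous : Continuous (distToSeq x) :=
  continuous_pi fun _ => continuous_id.dist continuous_const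

theorem exists_mem_comap_nhds_dist_lt {y : ℕ → ℝ} (hy : ∀ ε > 0, ∃ n, y n < ε) {ε : ℝ}
    (hε : 0 < ε) : ∃ s ∈ comap (distToSeq x) (𝓝 y), ∀ a ∈ s, ∀ b ∈ s, dist a b < ε := by
  obtain ⟨n, hn⟩ := hy (ε / 2) (half_pos hε)
  refine ⟨distToSeq x ⁻¹' {z | z n < ε / 2},
    preimage_mem_comap ((isOpen_lt (continuous_apply n) continuous_const).mem_nhds hn),
    fun a ha b hb => ?_⟩
  calc dist a b ≤ dist a (x n) + dist b (x n) := dist_triangle_right a b (x n)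
    _ < ε / 2 + ε / 2 := add_lt_add ha hb
    _ = ε := add_halves ε

variable {x}

theorem isEmbedding (hx : DenseRange x) : IsEmbedding (distToSeq x) := by
  have hind : IsInducing (distToSeq x) := by
    refine isInducing_iff_nhds.2 fun p =>
      le_antisymm ((continuous x).tendsto p).le_comap ((nhds_basis_ball.ge_iff).2 fun ε hε => ?_)
    obtain ⟨s, hs, hsε⟩ := exists_mem_comap_nhds_dist_lt x (fun ε hε => hx.exists_dist_lt p hε) hε
    obtain ⟨t, ht, hts⟩ := mem_comap.1 hs
    exact mem_of_superset hs fun b hb => hsε b hb p (hts (mem_preimage.2 (mem_of_mem_nhds ht)))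
  exact ⟨hind, hind.injective⟩

/-- Points of the closure of the range at which some coordinate is arbitrarily small come from
a Cauchy filter, hence lie in the range when `P` is complete. -/
theorem isGδ_range [CompleteSpace P] (hx : DenseRange x) : IsGδ (range (distToSeq x)) := by
  have hrange : range (distToSeq x) =
      closure (range (distToSeq x)) ∩ ⋂ k : ℕ, ⋃ n, {y : ℕ → ℝ | y n < 1 / (k + 1)} := by
    refine Subset.antisymm (subset_inter subset_closure ?_) ?_
    · rintro _ ⟨p, rfl⟩
      exact mem_iInter.2 fun k => mem_iUnion.2 (hx.exists_dist_lt p Nat.one_div_pos_of_nat)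
    rintro y ⟨hyc, hyG⟩
    have hy : ∀ ε > 0, ∃ n, y n < ε := fun ε hε => by
      obtain ⟨k, hk⟩ := exists_nat_one_div_lt hε
      obtain ⟨n, hn⟩ := mem_iUnion.1 (mem_iInter.1 hyG k)
      exact ⟨n, hn.trans hk⟩
    have hne : (comap (distToSeq x) (𝓝 y)).NeBot := comap_neBot fun t ht => by
      obtain ⟨_, hzt, p, rfl⟩ := mem_closure_iff_nhds.1 hyc t ht
      exact ⟨p, hzt⟩
    obtain ⟨p, hp⟩ := CompleteSpace.complete (Metric.cauchy_iff.2
      ⟨hne, fun ε hε => exists_mem_comap_nhds_dist_lt x hy hε⟩)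
    exact ⟨p, tendsto_nhds_unique (((continuous x).tendsto p).mono_left hp) tendsto_comap⟩
  rw [hrange]
  refine isClosed_closure.isGδ.inter (IsGδ.iInter fun k => (isOpen_iUnion fun n => ?_).isGδ)
  exact isOpen_lt (continuous_apply n) continuous_const

end distToSeq

theorem PolishSpace.exists_isEmbedding_isGδ_range (P : Type*) [TopologicalSpace P]
    [PolishSpace P] : ∃ e : P → ℕ → ℝ, IsEmbedding e ∧ IsGδ (range e) := by
  rcases isEmpty_or_nonempty P with hP | hP
  · exact ⟨fun _ _ => 0, .of_subsingleton _, by simpa only [range_eq_empty] using IsGδ.empty⟩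
  let := upgradeIsCompletelyMetrizable P
  obtain ⟨x, hx⟩ := exists_dense_seq P
  exact ⟨distToSeq x, distToSeq.isEmbedding hx, distToSeq.isGδ_range hx⟩

/-- If `range e = ⋂ Wₙ` and `gₙ` vanishes exactly off `Wₙ`, then `p ↦ (e p, (gₙ (e p))⁻¹)` has
the closed range `{(y, t) | ∀ n, gₙ y * tₙ = 1}`. -/
theorem Topology.IsEmbedding.exists_isClosedEmbedding_prod {P M : Type*} [TopologicalSpace P]
    [TopologicalSpace M] [PerfectlyNormalSpace M] {e : P → M} (he : IsEmbedding e)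
    (hGδ : IsGδ (range e)) : ∃ Φ : P → M × (ℕ → ℝ), IsClosedEmbedding Φ := by
  obtain ⟨W, hWo, hW⟩ := isGδ_iff_eq_iInter_nat.1 hGδ
  choose g hg using fun n => (perfectlyNormalSpace_iff_forall_isClosed_preimage_zero.1
    ‹_› _ (hWo n).isClosed_compl).imp fun _ h => h.1
  have hrange : ∀ y, y ∈ range e ↔ ∀ n, g n y ≠ 0 := fun y => by
    rw [hW, mem_iInter]
    refine forall_congr' fun n => ?_
    rw [← not_iff_not, not_not, ← mem_compl_iff, hg n, mem_preimage, mem_singleton_iff]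
  have hgΦ : ∀ p n, g n (e p) ≠ 0 := fun p => (hrange _).1 ⟨p, rfl⟩
  let Φ : P → M × (ℕ → ℝ) := fun p => (e p, fun n => (g n (e p))⁻¹)
  have hΦ : Continuous Φ := he.continuous.prodMk <| continuous_pi fun n =>
    ((g n).continuous.comp he.continuous).inv₀ fun p => hgΦ p n
  have hΦrange : range Φ = ⋂ n, {q | g n q.1 * q.2 n = 1} := by
    ext ⟨y, t⟩
    simp only [mem_range, mem_iInter, mem_ofPred_eq, Φ, Prod.mk.injEq]
    constructor
    · rintro ⟨p, rfl, rfl⟩ n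
      exact mul_inv_cancel₀ (hgΦ p n)
    · intro h
      obtain ⟨p, rfl⟩ := (hrange y).2 fun n => left_ne_zero_of_mul_eq_one (h n)
      exact ⟨p, rfl, funext fun n => (eq_inv_of_mul_eq_one_right (h n)).symm⟩
  refine ⟨Φ, IsEmbedding.of_comp hΦ continuous_fst he, ?_⟩
  rw [hΦrange]
  exact isClosed_iInter fun n => isClosed_eq (by fun_prop) continuous_const

theorem PolishSpace.exists_isClosedEmbedding (P : Type*) [TopologicalSpace P] [PolishSpace P] :
    ∃ Φ : P → (ℕ → ℝ) × (ℕ → ℝ), IsClosedEmbedding Φ := by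
  obtain ⟨e, he, hGδ⟩ := PolishSpace.exists_isEmbedding_isGδ_range P
  exact he.exists_isClosedEmbedding_prod hGδ

namespace IsANR

variable {P : Type u} [TopologicalSpace P]

theorem exists_nhds_retraction (hP : IsANR P) {X : Type u} [TopologicalSpace X]
    [MetrizableSpace X] {Φ : P → X} (hΦ : IsClosedEmbedding Φ) :
    ∃ U : Set X, IsOpen U ∧ range Φ ⊆ U ∧ ∃ r : C(U, P), ∀ p (hp : Φ p ∈ U), r ⟨Φ p, hp⟩ = p := by
  let h : P ≃ₜ range Φ := hΦ.isEmbedding.toHomeomorph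
  obtain ⟨U, hU, hΦU, r, hr⟩ :=
    hP X inferInstance inferInstance (range Φ) hΦ.isClosed_range (h.symm : C(range Φ, P))
  exact ⟨U, hU, hΦU, r, fun p hp => (hr (h p) hp).trans (h.symm_apply_apply p)⟩

variable {Z : Type u} [TopologicalSpace Z] [NormalSpace Z]

theorem exists_nhds_extension (hP : IsANR P) {T : Type u} [TopologicalSpace T]
    [MetrizableSpace T] [TietzeExtension.{u} T] {Φ : P → T} (hΦ : IsClosedEmbedding Φ)
    {A : Set Z} (hA : IsClosed A) (f : C(A, P)) :
    ∃ U : Set Z, IsOpen U ∧ A ⊆ U ∧ ∃ g : C(U, P),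
      ∀ a : A, ∀ hU : (a : Z) ∈ U, g ⟨a, hU⟩ = f a := by
  obtain ⟨V, hV, hΦV, r, hr⟩ := hP.exists_nhds_retraction hΦ
  obtain ⟨F, hF⟩ := ((⟨Φ, hΦ.continuous⟩ : C(P, T)).comp f).exists_restrict_eq hA
  have hFa : ∀ a : A, F a = Φ (f a) := fun a => DFunLike.congr_fun hF a
  refine ⟨F ⁻¹' V, hV.preimage F.continuous, fun a ha => ?_, r.comp (F.restrictPreimage V),
    fun a ha => ?_⟩
  · rw [mem_preimage, hFa ⟨a, ha⟩]
    exact hΦV (mem_range_self _)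
  · have hΦa : (⟨F a, ha⟩ : V) = ⟨Φ (f a), hFa a ▸ ha⟩ := Subtype.ext (hFa a)
    exact (congrArg r hΦa).trans (hr _ _)

theorem exists_nhds_extension_of_polishSpace [PolishSpace P] (hP : IsANR P) {A : Set Z}
    (hA : IsClosed A) (f : C(A, P)) :
    ∃ U : Set Z, IsOpen U ∧ A ⊆ U ∧ ∃ g : C(U, P),
      ∀ a : A, ∀ hU : (a : Z) ∈ U, g ⟨a, hU⟩ = f a := by
  obtain ⟨Φ, hΦ⟩ := PolishSpace.exists_isClosedEmbedding P
  let e : ULift.{u} ((ℕ → ℝ) × (ℕ → ℝ)) ≃ₜ (ℕ → ℝ) × (ℕ → ℝ) := Homeomorph.ulift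
  have := e.isEmbedding.metrizableSpace
  have := TietzeExtension.of_homeo.{u} e
  exact hP.exists_nhds_extension (e.symm.isClosedEmbedding.comp hΦ) hA f

end IsANR

theorem statement3_general (K P : Type u) [TopologicalSpace K] [TopologicalSpace P]
    (hP : PolishSpace P) (hANR : IsANR P)
    (hhe : Nonempty (ContinuousMap.HomotopyEquiv K P))
    (Z : Type u) [TopologicalSpace Z] [NormalSpace Z] (hZ : InAlpha K Z) :
    InAlpha P Z ∧ IsAbsExtensorOf P Z := by
  obtain ⟨e⟩ := hhe
  have hα : InAlpha P Z := hZ.of_homotopic_comp e.right_inv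
  exact ⟨hα, fun A hA f => hα A hA f (hANR.exists_nhds_extension_of_polishSpace hA f)⟩

theorem statement3 (K P : Type u) [TopologicalSpace K] [TopologicalSpace P]
    (hK : IsCWComplex K) (hP : PolishSpace P) (hANR : IsANR P)
    (hhe : Nonempty (ContinuousMap.HomotopyEquiv K P))
    (Z : Type u) [TopologicalSpace Z] [NormalSpace Z] (hZ : InAlpha K Z) :
    InAlpha P Z ∧ IsAbsExtensorOf P Z :=
  statement3_general K P hP hANR hhe Z hZ
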